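/- Let p be a prime, and let H and H' be finite graphs, neither of which has an automorphism of order p. If for every graph G the number of homomorphisms from G to H is congruent modulo p to the number of homomorphisms from G to H', then H and H' are isomorphic. -/

import Mathlib

structure SymGraph (V : Type) where
  Adj : V → V → Prop
  symm : ∀ u v, Adj u v → Adj v u

def SymGraph.IsHom {V W : Type} (G : SymGraph V) (H : SymGraph W) (f : V → W) : Prop :=
  ∀ u v, G.Adj u v → H.Adj (f u) (f v)

noncomputable def homCount {V W : Type} (G : SymGraph V) (H : SymGraph W) : ℕ :=
  Nat.card {f : V → W // G.IsHom H f}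

def SymGraph.IsAut {V : Type} (H : SymGraph V) (σ : Equiv.Perm V) : Prop :=
  ∀ u v, H.Adj u v ↔ H.Adj (σ u) (σ v)

def SymGraph.fixedSubgraph {V : Type} (H : SymGraph V) (σ : Equiv.Perm V) :
    SymGraph {v : V // σ v = v} :=
  ⟨fun u v => H.Adj u v, fun u v h => H.symm u v h⟩

/-
Partitioning the homomorphisms `G → H` by their kernels gives
`hom(G, H) = ∑ inj(G / s, H)` over all partitions `s` of the vertices of `G`; every quotient with
`s ≠ ⊥` is strictly smaller than `G`, so by induction on `|G|` the counts of injective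
homomorphisms also agree mod `p`. For `G = H`, `inj(H, H) = |Aut H|` is prime to `p` by Cauchy's
theorem, hence `inj(H, H') ≠ 0`, and symmetrically `inj(H', H) ≠ 0`. Injective homomorphisms in
both directions between finite graphs force an isomorphism.
-/

noncomputable def injHomCount {U V : Type} (G : SymGraph U) (H : SymGraph V) : ℕ :=
  Nat.card {f : U → V // G.IsHom H f ∧ Function.Injective f}

instance Setoid.instFinite {U : Type} [Finite U] : Finite (Setoid U) :=
  Finite.of_injective (fun s : Setoid U => ⇑s) fun _ _ => Setoid.eq_iff_rel_eq.2

noncomputable instance Setoid.instFintype {U : Type} [Finite U] : Fintype (Setoid U) :=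
  Fintype.ofFinite _

namespace SymGraph

variable {U V W : Type}

def quotient (G : SymGraph U) (s : Setoid U) : SymGraph (Quotient s) where
  Adj x y := ∃ u v, Quotient.mk s u = x ∧ Quotient.mk s v = y ∧ G.Adj u v
  symm := by
    rintro x y ⟨u, v, hu, hv, h⟩
    exact ⟨v, u, hv, hu, G.symm _ _ h⟩

theorem IsHom.comp {G : SymGraph U} {H : SymGraph V} {K : SymGraph W} {f : U → V} {g : V → W}
    (hg : H.IsHom K g) (hf : G.IsHom H f) : G.IsHom K (g ∘ f) :=
  fun u v h => hg _ _ (hf u v h)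

theorem homCount_eq_sum_card_ker [Finite U] [Finite V] (G : SymGraph U) (H : SymGraph V) :
    homCount G H = ∑ s : Setoid U, Nat.card {f : U → V // G.IsHom H f ∧ Setoid.ker f = s} := by
  rw [homCount, ← Nat.card_congr (Equiv.sigmaFiberEquiv fun f : {f // G.IsHom H f} =>
    Setoid.ker f.1), Nat.card_sigma]
  refine Finset.sum_congr rfl fun s _ => Nat.card_congr ?_
  exact Equiv.subtypeSubtypeEquivSubtypeInter (fun f : U → V => G.IsHom H f)
    (fun f => Setoid.ker f = s)

def kerEquivInjHom (G : SymGraph U) (H : SymGraph V) (s : Setoid U) :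
    {f : U → V // G.IsHom H f ∧ Setoid.ker f = s} ≃
      {g : Quotient s → V // (G.quotient s).IsHom H g ∧ Function.Injective g} where
  toFun f := ⟨Quotient.lift f.1 fun _ _ h => by rwa [← f.2.2] at h,
    by rintro _ _ ⟨u, v, rfl, rfl, h⟩; exact f.2.1 u v h,
    by rintro ⟨a⟩ ⟨b⟩ h; exact Quotient.sound (f.2.2 ▸ h)⟩
  invFun g := ⟨g.1 ∘ Quotient.mk s, fun u v h => g.2.1 _ _ ⟨u, v, rfl, rfl, h⟩,
    Setoid.ext fun _ _ => g.2.2.eq_iff.trans Quotient.eq⟩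
  left_inv _ := rfl
  right_inv g := Subtype.ext <| funext <| Quotient.ind fun _ => rfl

open Classical in
theorem homCount_eq_injHomCount_add_sum [Finite U] [Finite V] (G : SymGraph U)
    (H : SymGraph V) :
    homCount G H = injHomCount G H +
      ∑ s ∈ Finset.univ.erase (⊥ : Setoid U), injHomCount (G.quotient s) H := by
  rw [homCount_eq_sum_card_ker, ← Finset.add_sum_erase _ _ (Finset.mem_univ ⊥)]
  congr 1
  · simp only [Setoid.ker_eq_bot_iff]
    rfl
  · exact Finset.sum_congr rfl fun s _ => Nat.card_congr (kerEquivInjHom G H s)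

theorem card_quotient_lt [Finite U] {s : Setoid U} (hs : s ≠ ⊥) :
    Nat.card (Quotient s) < Nat.card U := by
  classical
  have := Fintype.ofFinite U
  simp only [Nat.card_eq_fintype_card]
  refine Fintype.card_lt_of_surjective_not_injective _ Quotient.mk_surjective fun h => hs ?_
  rwa [Setoid.injective_iff_ker_bot, Setoid.ker_mk_eq] at h

open Classical in
theorem injHomCount_modEq_of_homCount_modEq {n : ℕ} [Finite V] [Finite W] {H : SymGraph V}
    {H' : SymGraph W}
    (hhom : ∀ (U : Type) [Fintype U] (G : SymGraph U), homCount G H ≡ homCount G H' [MOD n])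
    [Finite U] (G : SymGraph U) : injHomCount G H ≡ injHomCount G H' [MOD n] := by
  induction hU : Nat.card U using Nat.strong_induction_on generalizing U with
  | _ m ih =>
    have hquot : ∑ s ∈ Finset.univ.erase (⊥ : Setoid U), injHomCount (G.quotient s) H ≡
        ∑ s ∈ Finset.univ.erase (⊥ : Setoid U), injHomCount (G.quotient s) H' [MOD n] :=
      Nat.ModEq.sum fun s hs =>
        ih _ (hU ▸ card_quotient_lt (Finset.ne_of_mem_erase hs)) (G.quotient s) rfl
    have hG : homCount G H ≡ homCount G H' [MOD n] := by
      have := Fintype.ofFinite U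
      exact hhom U G
    rw [homCount_eq_injHomCount_add_sum, homCount_eq_injHomCount_add_sum] at hG
    exact Nat.ModEq.add_right_cancel hquot hG

/-- An injective endomorphism of a finite graph permutes its finitely many edges. -/
theorem IsHom.adj_iff_of_injective [Finite V] {H : SymGraph V} {f : V → V} (hf : H.IsHom H f)
    (hinj : Function.Injective f) (u v : V) : H.Adj (f u) (f v) ↔ H.Adj u v := by
  refine ⟨fun h => ?_, hf u v⟩
  let onEdges : {x : V × V // H.Adj x.1 x.2} → {x : V × V // H.Adj x.1 x.2} :=
    fun x => ⟨Prod.map f f x.1, hf _ _ x.2⟩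
  have hsurj : Function.Surjective onEdges := Finite.surjective_of_injective
    fun x y hxy => Subtype.ext ((hinj.prodMap hinj) (congrArg Subtype.val hxy))
  obtain ⟨⟨⟨a, b⟩, hab⟩, heq⟩ := hsurj ⟨(f u, f v), h⟩
  simp only [onEdges, Subtype.mk.injEq, Prod.map, Prod.mk.injEq] at heq
  rwa [← hinj heq.1, ← hinj heq.2]

def autGroup (H : SymGraph V) : Subgroup (Equiv.Perm V) where
  carrier := {σ | H.IsAut σ}
  one_mem' _ _ := Iff.rfl
  mul_mem' hσ hτ u v := (hτ u v).trans (hσ _ _)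
  inv_mem' {σ} hσ u v := by simpa using (hσ (σ⁻¹ u) (σ⁻¹ v)).symm

theorem injHomCount_self [Finite V] (H : SymGraph V) :
    injHomCount H H = Nat.card H.autGroup :=
  Nat.card_congr
    { toFun f := ⟨Equiv.ofBijective f.1 (Finite.injective_iff_bijective.1 f.2.2),
        fun u v => (f.2.1.adj_iff_of_injective f.2.2 u v).symm⟩
      invFun σ := ⟨σ.1, fun u v => (σ.2 u v).1, σ.1.injective⟩
      left_inv _ := rfl
      right_inv _ := Subtype.ext <| Equiv.ext fun _ => rfl }

theorem not_dvd_injHomCount_self [Finite V] {p : ℕ} (hp : p.Prime) (H : SymGraph V)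
    (hH : ¬∃ σ : Equiv.Perm V, H.IsAut σ ∧ orderOf σ = p) : ¬p ∣ injHomCount H H := by
  have := Fact.mk hp
  rw [injHomCount_self]
  intro hdvd
  obtain ⟨σ, hσ⟩ := exists_prime_orderOf_dvd_card' (G := H.autGroup) p hdvd
  exact hH ⟨σ, σ.2, by rwa [Subgroup.orderOf_coe]⟩

theorem exists_injective_hom_of_homCount_modEq [Finite V] [Finite W] {p : ℕ} (hp : p.Prime)
    {H : SymGraph V} {H' : SymGraph W} (hH : ¬∃ σ : Equiv.Perm V, H.IsAut σ ∧ orderOf σ = p)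
    (hhom : ∀ (U : Type) [Fintype U] (G : SymGraph U), homCount G H ≡ homCount G H' [MOD p]) :
    ∃ f : V → W, H.IsHom H' f ∧ Function.Injective f := by
  have hne : injHomCount H H' ≠ 0 := fun h0 => not_dvd_injHomCount_self hp H hH <|
    (Nat.modEq_zero_iff_dvd).1 (h0 ▸ injHomCount_modEq_of_homCount_modEq hhom H)
  obtain ⟨⟨f, hf⟩⟩ := Nat.card_ne_zero.1 hne |>.1
  exact ⟨f, hf⟩

theorem exists_iso_of_injective_homs [Finite V] [Finite W] {H : SymGraph V} {H' : SymGraph W}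
    {f : V → W} {g : W → V} (hf : H.IsHom H' f) (hf_inj : Function.Injective f)
    (hg : H'.IsHom H g) (hg_inj : Function.Injective g) :
    ∃ e : V ≃ W, ∀ u v, H.Adj u v ↔ H'.Adj (e u) (e v) := by
  have hcard : Nat.card W ≤ Nat.card V := Nat.card_le_card_of_injective g hg_inj
  refine ⟨Equiv.ofBijective f (hf_inj.bijective_of_nat_card_le hcard), fun u v =>
    ⟨hf u v, fun h => ?_⟩⟩
  exact ((hg.comp hf).adj_iff_of_injective (hg_inj.comp hf_inj) u v).1 (hg _ _ h)

end SymGraph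

/-- If H, H' have no automorphisms of order p and the same mod-p Lovász vector,
then they are isomorphic. -/
theorem stmt3 (p : ℕ) (hp : p.Prime) {V W : Type} [Fintype V] [Fintype W]
    (H : SymGraph V) (H' : SymGraph W)
    (hH : ¬∃ σ : Equiv.Perm V, H.IsAut σ ∧ orderOf σ = p)
    (hH' : ¬∃ σ : Equiv.Perm W, H'.IsAut σ ∧ orderOf σ = p)
    (hhom : ∀ (U : Type) [Fintype U] (G : SymGraph U),
      homCount G H ≡ homCount G H' [MOD p]) :
    ∃ e : V ≃ W, ∀ u v, H.Adj u v ↔ H'.Adj (e u) (e v) := by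
  obtain ⟨f, hf, hf_inj⟩ := SymGraph.exists_injective_hom_of_homCount_modEq hp hH hhom
  obtain ⟨g, hg, hg_inj⟩ :=
    SymGraph.exists_injective_hom_of_homCount_modEq hp hH' fun U _ G => (hhom U G).symm
  exact SymGraph.exists_iso_of_injective_homs hf hf_inj hg hg_inj
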